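/- Let $n \ge 1$. The ring $C_n' := \mathbb{C}[x,y]/(x^{n+1}, x^n y, y^2)$ is isomorphic to the fibre product of rings $B_{n-1} \times_{A_{n-1}} A_n$, where $B_{n-1} = \mathbb{C}[x,y]/(x^n, y^2)$, $A_n = \mathbb{C}[t]/(t^{n+1})$, $A_{n-1} = \mathbb{C}[t]/(t^n)$, the map $B_{n-1} \to A_{n-1}$ sends $x \mapsto t$, $y \mapsto 0$, and the map $A_n \to A_{n-1}$ is the natural quotient; the isomorphism sends $x \mapsto (x, t)$ and $y \mapsto (y, 0)$. -/

import Mathlib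

open MvPolynomial

noncomputable section

/-- `ℂ[t]/(t^m)` (so `m = n+1` gives `A_n`). -/
def AJ (m : ℕ) : Ideal (Polynomial ℂ) := Ideal.span {(Polynomial.X : Polynomial ℂ) ^ m}
abbrev AQ (m : ℕ) : Type := Polynomial ℂ ⧸ AJ m
def tQ (m : ℕ) : AQ m := Ideal.Quotient.mk (AJ m) Polynomial.X

/-- `B_{n-1} = ℂ[x,y]/(x^n, y^2)`. -/
def BJ (n : ℕ) : Ideal (MvPolynomial (Fin 2) ℂ) :=
  Ideal.span {(X 0 : MvPolynomial (Fin 2) ℂ) ^ n, (X 1 : MvPolynomial (Fin 2) ℂ) ^ 2}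
abbrev BQ (n : ℕ) : Type := MvPolynomial (Fin 2) ℂ ⧸ BJ n
def xBQ (n : ℕ) : BQ n := Ideal.Quotient.mk (BJ n) (X 0)
def yBQ (n : ℕ) : BQ n := Ideal.Quotient.mk (BJ n) (X 1)

/-- `C_n' = ℂ[x,y]/(x^{n+1}, x^n y, y^2)`. -/
def CJ (n : ℕ) : Ideal (MvPolynomial (Fin 2) ℂ) :=
  Ideal.span {(X 0 : MvPolynomial (Fin 2) ℂ) ^ (n + 1),
    (X 0 : MvPolynomial (Fin 2) ℂ) ^ n * (X 1 : MvPolynomial (Fin 2) ℂ),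
    (X 1 : MvPolynomial (Fin 2) ℂ) ^ 2}
abbrev CQ (n : ℕ) : Type := MvPolynomial (Fin 2) ℂ ⧸ CJ n
def xCQ (n : ℕ) : CQ n := Ideal.Quotient.mk (CJ n) (X 0)
def yCQ (n : ℕ) : CQ n := Ideal.Quotient.mk (CJ n) (X 1)

/-!
Consider `φ : ℂ[x,y] → B_{n-1} × A_n`, `f ↦ (f mod (x^n, y^2), f(t,0) mod t^{n+1})`.
Its image is the fibre product: if `F(t,0) ≡ p mod t^n`, say `p - F(t,0) = t^n q(t)`, then
`F + x^n q(x)` maps to `(F, p)`. Its kernel is `(x^n, y^2) ∩ {f | t^{n+1} ∣ f(t,0)}`, which is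
`(x^{n+1}, x^n y, y^2)`: if `f = u x^n + w y^2` and `t^{n+1} ∣ u(t,0) t^n`, then `u ∈ (x, y)`.
The first isomorphism theorem concludes.
-/

section XAxis

variable {R : Type*} [CommRing R]

def yToZero : MvPolynomial (Fin 2) R →ₐ[R] Polynomial R :=
  aeval ![Polynomial.X, 0]

def tToX : Polynomial R →ₐ[R] MvPolynomial (Fin 2) R :=
  Polynomial.aeval (X 0)

@[simp] lemma yToZero_X0 : yToZero (X 0 : MvPolynomial (Fin 2) R) = Polynomial.X := by
  simp [yToZero]

@[simp] lemma yToZero_X1 : yToZero (X 1 : MvPolynomial (Fin 2) R) = 0 := by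
  simp [yToZero]

@[simp] lemma yToZero_tToX (p : Polynomial R) : yToZero (tToX p) = p := by
  simp [tToX, ← Polynomial.aeval_algHom_apply, yToZero]

lemma sub_tToX_yToZero_mem_span_X1 (p : MvPolynomial (Fin 2) R) :
    p - tToX (yToZero p) ∈ Ideal.span {(X 1 : MvPolynomial (Fin 2) R)} := by
  have hcomp : (Ideal.Quotient.mkₐ R (Ideal.span {X 1})).comp (tToX.comp yToZero) =
      Ideal.Quotient.mkₐ R (Ideal.span {(X 1 : MvPolynomial (Fin 2) R)}) := by
    refine MvPolynomial.algHom_ext fun i => ?_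
    fin_cases i
    · simp [tToX]
    · simp
  rw [← Ideal.Quotient.eq, eq_comm]
  exact AlgHom.congr_fun hcomp p

end XAxis

lemma X0_pow_mem_BJ (n : ℕ) : (X 0 : MvPolynomial (Fin 2) ℂ) ^ n ∈ BJ n :=
  Ideal.subset_span (by simp)

lemma BJ_inf_comap_yToZero (n : ℕ) : BJ n ⊓ (AJ (n + 1)).comap yToZero = CJ n := by
  have hx : (X 0 : MvPolynomial (Fin 2) ℂ) ^ (n + 1) ∈ CJ n := Ideal.subset_span (by simp)
  have hxy : (X 0 : MvPolynomial (Fin 2) ℂ) ^ n * X 1 ∈ CJ n := Ideal.subset_span (by simp)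
  have hy : (X 1 : MvPolynomial (Fin 2) ℂ) ^ 2 ∈ CJ n := Ideal.subset_span (by simp)
  apply le_antisymm
  · rintro f ⟨hfB, hfA⟩
    obtain ⟨u, w, rfl⟩ := Ideal.mem_span_pair.mp hfB
    have hdvd : Polynomial.X ∣ yToZero u := by
      have : Polynomial.X ^ n * Polynomial.X ∣ Polynomial.X ^ n * yToZero u := by
        simpa [AJ, Ideal.mem_span_singleton, pow_succ, mul_comm] using hfA
      exact (mul_dvd_mul_iff_left (pow_ne_zero n Polynomial.X_ne_zero)).mp this
    obtain ⟨U, hU⟩ := hdvd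
    obtain ⟨r, hr⟩ := Ideal.mem_span_singleton'.mp (sub_tToX_yToZero_mem_span_X1 u)
    have hu : u = X 0 * tToX U + r * X 1 := by
      rw [hr, hU, map_mul]
      simp [tToX]
    have hf : u * X 0 ^ n + w * X 1 ^ 2 =
        tToX U * X 0 ^ (n + 1) + r * (X 0 ^ n * X 1) + w * X 1 ^ 2 := by
      rw [hu]; ring
    rw [hf]
    apply_rules [Ideal.add_mem, Ideal.mul_mem_left]
  · have hxB := X0_pow_mem_BJ n
    have hyB : (X 1 : MvPolynomial (Fin 2) ℂ) ^ 2 ∈ BJ n := Ideal.subset_span (by simp)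
    have htA : (Polynomial.X : Polynomial ℂ) ^ (n + 1) ∈ AJ (n + 1) :=
      Ideal.mem_span_singleton_self _
    refine Ideal.span_le.mpr ?_
    simp only [Set.insert_subset_iff, Set.singleton_subset_iff, SetLike.mem_coe, Ideal.mem_inf,
      Ideal.mem_comap, map_mul, map_pow, yToZero_X0, yToZero_X1]
    refine ⟨⟨?_, htA⟩, ⟨Ideal.mul_mem_right _ _ hxB, by simp⟩, hyB, by simp⟩
    rw [pow_succ]
    exact Ideal.mul_mem_right _ _ hxB

def toFibre (n : ℕ) : MvPolynomial (Fin 2) ℂ →ₐ[ℂ] BQ n × AQ (n + 1) :=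
  (Ideal.Quotient.mkₐ ℂ (BJ n)).prod ((Ideal.Quotient.mkₐ ℂ (AJ (n + 1))).comp yToZero)

lemma ker_toFibre (n : ℕ) : RingHom.ker (toFibre n) = CJ n := by
  rw [← BJ_inf_comap_yToZero]
  ext f
  simp [toFibre, Prod.ext_iff, Ideal.Quotient.eq_zero_iff_mem]

lemma comp_mkₐ_BJ_eq {n m : ℕ} (g : BQ n →ₐ[ℂ] AQ m) (hgx : g (xBQ n) = tQ m)
    (hgy : g (yBQ n) = 0) :
    g.comp (Ideal.Quotient.mkₐ ℂ (BJ n)) = (Ideal.Quotient.mkₐ ℂ (AJ m)).comp yToZero := by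
  refine MvPolynomial.algHom_ext fun i => ?_
  fin_cases i
  · simpa [xBQ, tQ] using hgx
  · simpa [yBQ] using hgy

lemma comp_mkₐ_AJ_eq {m k : ℕ} (h : AQ m →ₐ[ℂ] AQ k) (hh : h (tQ m) = tQ k) :
    h.comp (Ideal.Quotient.mkₐ ℂ (AJ m)) = Ideal.Quotient.mkₐ ℂ (AJ k) :=
  Polynomial.algHom_ext (by simpa [tQ] using hh)

lemma range_toFibre {n : ℕ} (g : BQ n →ₐ[ℂ] AQ n) (hgx : g (xBQ n) = tQ n)
    (hgy : g (yBQ n) = 0) (h : AQ (n + 1) →ₐ[ℂ] AQ n) (hh : h (tQ (n + 1)) = tQ n) :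
    (toFibre n).range = AlgHom.equalizer (g.comp (AlgHom.fst ℂ (BQ n) (AQ (n + 1))))
      (h.comp (AlgHom.snd ℂ (BQ n) (AQ (n + 1)))) := by
  have hg_mk := AlgHom.congr_fun (comp_mkₐ_BJ_eq g hgx hgy)
  have hh_mk := AlgHom.congr_fun (comp_mkₐ_AJ_eq h hh)
  simp only [AlgHom.comp_apply, Ideal.Quotient.mkₐ_eq_mk] at hg_mk hh_mk
  ext ⟨b, a⟩
  obtain ⟨F, rfl⟩ := Ideal.Quotient.mk_surjective b
  obtain ⟨p, rfl⟩ := Ideal.Quotient.mk_surjective a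
  simp only [toFibre, AlgHom.mem_range, AlgHom.mem_equalizer, AlgHom.prod_apply,
    AlgHom.comp_apply, AlgHom.fst_apply, AlgHom.snd_apply, Ideal.Quotient.mkₐ_eq_mk, Prod.mk.injEq,
    hg_mk, hh_mk]
  constructor
  · rintro ⟨f, hfF, hfp⟩
    rw [← hg_mk, ← hfF, hg_mk, ← hh_mk, hfp, hh_mk]
  · intro hFp
    obtain ⟨q, hq⟩ := Ideal.mem_span_singleton'.mp (Ideal.Quotient.eq.mp hFp.symm)
    refine ⟨F + X 0 ^ n * tToX q, ?_, ?_⟩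
    · rw [Ideal.Quotient.eq, add_sub_cancel_left]
      exact Ideal.mul_mem_right _ _ (X0_pow_mem_BJ n)
    · congr 1
      simp only [map_add, map_mul, map_pow, yToZero_X0, yToZero_tToX]
      linear_combination hq

theorem statement7_general (n : ℕ)
    (g : BQ n →ₐ[ℂ] AQ n) (hgx : g (xBQ n) = tQ n) (hgy : g (yBQ n) = 0)
    (h : AQ (n + 1) →ₐ[ℂ] AQ n) (hh : h (tQ (n + 1)) = tQ n) :
    ∃ e : CQ n ≃ₐ[ℂ]
        (AlgHom.equalizer (g.comp (AlgHom.fst ℂ (BQ n) (AQ (n + 1))))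
          (h.comp (AlgHom.snd ℂ (BQ n) (AQ (n + 1))))),
      (e (xCQ n) : BQ n × AQ (n + 1)) = (xBQ n, tQ (n + 1)) ∧
      (e (yCQ n) : BQ n × AQ (n + 1)) = (yBQ n, 0) := by
  let e := (Ideal.quotientEquivAlgOfEq ℂ (ker_toFibre n).symm).trans <|
    (Ideal.quotientKerEquivRange (toFibre n)).trans <|
      Subalgebra.equivOfEq _ _ (range_toFibre g hgx hgy h hh)
  have he (f : MvPolynomial (Fin 2) ℂ) :
      (e (Ideal.Quotient.mk (CJ n) f) : BQ n × AQ (n + 1)) = toFibre n f := rfl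
  refine ⟨e, ?_, ?_⟩
  · simp [he, xCQ, toFibre, xBQ, tQ]
  · simp [he, yCQ, toFibre, yBQ]

/-- `C_n' = ℂ[x,y]/(x^{n+1}, x^n y, y^2)` is isomorphic to the fibre product
`B_{n-1} ×_{A_{n-1}} A_n`, where `g : B_{n-1} → A_{n-1}` sends `x ↦ t`, `y ↦ 0`,
and `A_n → A_{n-1}` is the natural quotient (`t ↦ t`); the isomorphism sends
`x ↦ (x, t)` and `y ↦ (y, 0)`. The fibre product is realised as the equalizer
subalgebra of `B_{n-1} × A_n`. -/
theorem statement7 (n : ℕ) (hn : 1 ≤ n)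
    (g : BQ n →ₐ[ℂ] AQ n) (hgx : g (xBQ n) = tQ n) (hgy : g (yBQ n) = 0)
    (h : AQ (n + 1) →ₐ[ℂ] AQ n) (hh : h (tQ (n + 1)) = tQ n) :
    ∃ e : CQ n ≃ₐ[ℂ]
        (AlgHom.equalizer (g.comp (AlgHom.fst ℂ (BQ n) (AQ (n + 1))))
          (h.comp (AlgHom.snd ℂ (BQ n) (AQ (n + 1))))),
      (e (xCQ n) : BQ n × AQ (n + 1)) = (xBQ n, tQ (n + 1)) ∧
      (e (yCQ n) : BQ n × AQ (n + 1)) = (yBQ n, 0) :=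
  statement7_general n g hgx hgy h hh

end
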